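/- If two bricks A and B tile a box Q ⊂ R^d (d ≥ 2) by translations and brick A does not by itself tile Q, then there is an index k such that for every j ≠ k, the j-th side length of B divides the j-th side length of Q (i.e. q_j/b_j ∈ Z). -/

import Mathlib

open MeasureTheory Set Complex
open scoped Real

/-!
Integrate the tiling identity against `x ↦ exp (2πi (x_i / a_i + x_ℓ / b_ℓ))`. Every translate of
`A` contributes `0` (its `i`-th side is a full period), and so does every translate of `B` (its
`ℓ`-th side is), hence so does `Q`; since the integral over `Q` factors over the coordinates, this
forces `a_i ∣ q_i` or `b_ℓ ∣ q_ℓ`. If the conclusion failed, every `i` would have such an `ℓ ≠ i`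
with `b_ℓ ∤ q_ℓ`, so every `a_i` would divide `q_i`, and then `A` tiles `Q` by a grid of translates.
-/

namespace BrickTiling

theorem setIntegral_Ioo_cexp_mul {u L : ℝ} (hL : 0 ≤ L) {k : ℂ} (hk : k ≠ 0) :
    ∫ t in Ioo u (u + L), cexp (k * t) = cexp (k * u) * (cexp (k * L) - 1) / k := by
  rw [← integral_Ioc_eq_integral_Ioo, ← intervalIntegral.integral_of_le (by linarith),
    integral_exp_mul_complex hk, mul_sub, mul_one, ← Complex.exp_add]
  push_cast
  ring_nf

theorem setIntegral_Ioo_cexp_period_eq_zero (u L : ℝ) :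
    ∫ t in Ioo u (u + L), cexp (2 * π * I / L * t) = 0 := by
  rcases le_or_gt L 0 with hL | hL
  · simp [Ioo_eq_empty (by linarith : ¬ u < u + L)]
  · have hL' : (L : ℂ) ≠ 0 := by exact_mod_cast hL.ne'
    rw [setIntegral_Ioo_cexp_mul hL.le (by simp [hL', Real.pi_ne_zero]),
      div_mul_cancel₀ _ hL', Complex.exp_two_pi_mul_I]
    simp

theorem setIntegral_Ioo_zero_cexp_eq_zero_iff {q : ℝ} (hq : 0 < q) (p : ℝ) :
    ∫ t in Ioo 0 q, cexp (2 * π * I / p * t) = 0 ↔ ∃ n : ℤ, q = p * n := by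
  rcases eq_or_ne p 0 with rfl | hp
  · simp [hq.le, hq.ne']
  · have hp' : (p : ℂ) ≠ 0 := by exact_mod_cast hp
    have hk : 2 * π * I / p ≠ 0 := by simp [hp', Real.pi_ne_zero]
    have := setIntegral_Ioo_cexp_mul (u := 0) hq.le hk
    rw [zero_add] at this
    rw [this, Complex.ofReal_zero, mul_zero, Complex.exp_zero, one_mul, div_eq_zero_iff,
      or_iff_left hk, sub_eq_zero, Complex.exp_eq_one_iff]
    have h2πI : 2 * π * I ≠ 0 := by simp [Real.pi_ne_zero]
    refine exists_congr fun n => ?_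
    rw [← Complex.ofReal_inj, show 2 * π * I / p * q = 2 * π * I * (q / p) by ring,
      mul_comm (n : ℂ), mul_right_inj' h2πI, div_eq_iff hp']
    push_cast
    rw [mul_comm (p : ℂ)]

theorem indicator_Ioo_zero_sub (s c t : ℝ) :
    (Ioo 0 s).indicator (1 : ℝ → ℝ) (t - c) = (Ioo c (c + s)).indicator 1 t := by
  simp only [indicator_apply, mem_Ioo, sub_pos, sub_lt_iff_lt_add', Pi.one_apply]

variable {ι : Type*}

def brick (s : ι → ℝ) : Set (ι → ℝ) := {x | ∀ j, x j ∈ Ioo 0 (s j)}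

theorem indicator_setOf_euclideanSpace (s : ι → ℝ) (x : EuclideanSpace ℝ ι) :
    {x : EuclideanSpace ℝ ι | ∀ j, x j ∈ Ioo 0 (s j)}.indicator (fun _ => (1 : ℝ)) x =
      (brick s).indicator 1 x.ofLp :=
  rfl

variable [Fintype ι]

theorem indicator_brick_apply (s x : ι → ℝ) :
    (brick s).indicator 1 x = ∏ j, (Ioo 0 (s j)).indicator (1 : ℝ → ℝ) (x j) := by
  simp [indicator_apply, Finset.prod_boole, brick]

/-- A period `p j = 0` gives the constant factor `1`, since `2πi / 0 = 0`. -/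
noncomputable def periodicChar (p x : ι → ℝ) : ℂ := ∏ j, cexp (2 * π * I / p j * x j)

theorem indicator_brick_sub_mul_periodicChar (p s c x : ι → ℝ) :
    (((brick s).indicator 1 (x - c) : ℝ) : ℂ) * periodicChar p x =
      ∏ j, (Ioo (c j) (c j + s j)).indicator (fun t => cexp (2 * π * I / p j * t)) (x j) := by
  rw [indicator_brick_apply, periodicChar, Complex.ofReal_prod, ← Finset.prod_mul_distrib]
  refine Finset.prod_congr rfl fun j _ => ?_
  rw [Pi.sub_apply, indicator_Ioo_zero_sub]
  by_cases h : x j ∈ Ioo (c j) (c j + s j) <;> simp [h]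

theorem integrable_indicator_brick_sub_mul_periodicChar (p s c : ι → ℝ) :
    Integrable fun x => (((brick s).indicator 1 (x - c) : ℝ) : ℂ) * periodicChar p x := by
  simp_rw [indicator_brick_sub_mul_periodicChar]
  refine Integrable.fintype_prod fun j => ?_
  rw [integrable_indicator_iff measurableSet_Ioo]
  exact (Continuous.integrableOn_Icc (by fun_prop)).mono_set Ioo_subset_Icc_self

theorem integral_indicator_brick_sub_mul_periodicChar (p s c : ι → ℝ) :
    ∫ x, (((brick s).indicator 1 (x - c) : ℝ) : ℂ) * periodicChar p x =
      ∏ j, ∫ t in Ioo (c j) (c j + s j), cexp (2 * π * I / p j * t) := by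
  simp_rw [indicator_brick_sub_mul_periodicChar, ← integral_indicator measurableSet_Ioo]
  exact integral_fintype_prod_eq_prod (fun j t => (Ioo (c j) (c j + s j)).indicator
    (fun t => cexp (2 * π * I / p j * t)) t)

noncomputable def coverNumber (s : ι → ℝ) (Λ : Finset (ι → ℝ)) (x : ι → ℝ) : ℝ :=
  ∑ l ∈ Λ, (brick s).indicator 1 (x - l)

theorem sum_integral_brick_eq_of_tiling {a b q : ι → ℝ} {Λa Λb : Finset (ι → ℝ)}
    (htile : ∀ᵐ x, coverNumber a Λa x + coverNumber b Λb x = (brick q).indicator 1 x)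
    (p : ι → ℝ) :
    (∑ l ∈ Λa, ∏ j, ∫ t in Ioo (l j) (l j + a j), cexp (2 * π * I / p j * t)) +
      ∑ l ∈ Λb, ∏ j, ∫ t in Ioo (l j) (l j + b j), cexp (2 * π * I / p j * t) =
      ∏ j, ∫ t in Ioo 0 (q j), cexp (2 * π * I / p j * t) := by
  have hint := integrable_indicator_brick_sub_mul_periodicChar p
  calc _ = ∫ x, ((coverNumber a Λa x + coverNumber b Λb x : ℝ) : ℂ) * periodicChar p x := by
        simp only [coverNumber, Complex.ofReal_add, Complex.ofReal_sum, add_mul, Finset.sum_mul]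
        rw [integral_add (integrable_finsetSum _ fun l _ => hint a l)
          (integrable_finsetSum _ fun l _ => hint b l), integral_finsetSum _ fun l _ => hint a l,
          integral_finsetSum _ fun l _ => hint b l]
        simp only [integral_indicator_brick_sub_mul_periodicChar]
    _ = ∫ x, (((brick q).indicator 1 (x - 0) : ℝ) : ℂ) * periodicChar p x :=
        integral_congr_ae (htile.mono fun x hx => by simp only [hx, sub_zero])
    _ = _ := by rw [integral_indicator_brick_sub_mul_periodicChar]; simp

theorem exists_eq_mul_of_two_brick_tiling {a b q : ι → ℝ} (hq : ∀ j, 0 < q j)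
    {Λa Λb : Finset (ι → ℝ)}
    (htile : ∀ᵐ x, coverNumber a Λa x + coverNumber b Λb x = (brick q).indicator 1 x)
    {i ℓ : ι} (hℓi : ℓ ≠ i) (hℓ : ∀ n : ℤ, q ℓ ≠ b ℓ * n) : ∃ n : ℤ, q i = a i * n := by
  classical
  set p := Function.update (Function.update (0 : ι → ℝ) ℓ (b ℓ)) i (a i)
  have hpi : p i = a i := Function.update_self ..
  have hpℓ : p ℓ = b ℓ := by simp [p, hℓi]
  have hQ : ∏ j, ∫ t in Ioo 0 (q j), cexp (2 * π * I / p j * t) = 0 := by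
    have hA (l : ι → ℝ) : ∏ j, ∫ t in Ioo (l j) (l j + a j), cexp (2 * π * I / p j * t) = 0 :=
      Finset.prod_eq_zero (Finset.mem_univ i) (hpi ▸ setIntegral_Ioo_cexp_period_eq_zero _ _)
    have hB (l : ι → ℝ) : ∏ j, ∫ t in Ioo (l j) (l j + b j), cexp (2 * π * I / p j * t) = 0 :=
      Finset.prod_eq_zero (Finset.mem_univ ℓ) (hpℓ ▸ setIntegral_Ioo_cexp_period_eq_zero _ _)
    simp [← sum_integral_brick_eq_of_tiling htile p, hA, hB]
  obtain ⟨j, -, hj⟩ := Finset.prod_eq_zero_iff.1 hQ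
  obtain ⟨n, hn⟩ := (setIntegral_Ioo_zero_cexp_eq_zero_iff (hq j) (p j)).1 hj
  by_cases hji : j = i
  · subst hji
    exact ⟨n, hpi ▸ hn⟩
  by_cases hjℓ : j = ℓ
  · subst hjℓ
    exact absurd (hpℓ ▸ hn) (hℓ n)
  · have hpj : p j = 0 := by simp [p, hji, hjℓ]
    exact absurd (by simpa [hpj] using hn) (hq j).ne'

theorem sum_indicator_Ico_sub_mul {α : ℝ} (hα : 0 ≤ α) (m : ℕ) (t : ℝ) :
    ∑ c ∈ Finset.range m, (Ico 0 α).indicator (1 : ℝ → ℝ) (t - α * c) =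
      (Ico 0 (α * m)).indicator 1 t := by
  induction m with
  | zero => simp
  | succ m ih =>
    rw [Finset.sum_range_succ, ih]
    simp only [indicator_apply, mem_Ico, Pi.one_apply, Nat.cast_succ, mul_add, mul_one]
    have := mul_nonneg hα m.cast_nonneg
    split_ifs <;> grind

theorem indicator_Ioo_eq_indicator_Ico {α M : Type*} [LinearOrder α] [Zero M] {a b x : α}
    (hx : x ≠ a) (f : α → M) :
    (Ioo a b).indicator f x = (Ico a b).indicator f x := by
  simp [indicator_apply, lt_iff_le_and_ne, hx.symm]

theorem ae_sum_indicator_Ioo_sub_mul {α : ℝ} (hα : 0 ≤ α) (m : ℕ) :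
    ∀ᵐ t : ℝ, ∑ c ∈ Finset.range m, (Ioo 0 α).indicator (1 : ℝ → ℝ) (t - α * c) =
      (Ioo 0 (α * m)).indicator 1 t := by
  have hgrid : ∀ᵐ t : ℝ, ∀ c ∈ Finset.range m, t ≠ α * c :=
    (Filter.eventually_all_finset _).2 fun c _ => Measure.ae_ne volume _
  filter_upwards [hgrid, Measure.ae_ne volume 0] with t ht ht0
  rw [indicator_Ioo_eq_indicator_Ico ht0, ← sum_indicator_Ico_sub_mul hα]
  exact Finset.sum_congr rfl fun c hc => indicator_Ioo_eq_indicator_Ico (sub_ne_zero.2 (ht c hc)) _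

theorem ae_sum_indicator_brick_grid [DecidableEq ι] {a : ι → ℝ} (ha : ∀ j, 0 ≤ a j)
    (m : ι → ℕ) :
    ∀ᵐ x, ∑ c ∈ Fintype.piFinset fun j => Finset.range (m j),
      (brick a).indicator (1 : (ι → ℝ) → ℝ) (x - fun j => a j * c j) =
      (brick fun j => a j * m j).indicator 1 x := by
  filter_upwards [Measure.ae_eq_pi fun j => ae_sum_indicator_Ioo_sub_mul (ha j) (m j)] with x hx
  simpa only [indicator_brick_apply, Pi.sub_apply, Finset.prod_univ_sum]
    using congrArg (fun f => ∏ j, f j) hx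

theorem exists_brick_tiling_of_forall_eq_mul {a q : ι → ℝ} (ha : ∀ j, 0 < a j)
    (hq : ∀ j, 0 < q j) (hdiv : ∀ j, ∃ n : ℤ, q j = a j * n) :
    ∃ Λ, ∀ᵐ x, coverNumber a Λ x = (brick q).indicator 1 x := by
  classical
  have hdiv' (j : ι) : ∃ m : ℕ, q j = a j * m := by
    obtain ⟨n, hn⟩ := hdiv j
    have hn0 : 0 ≤ n := by
      have := hq j
      rw [hn] at this
      exact_mod_cast (pos_of_mul_pos_right this (ha j).le).le
    lift n to ℕ using hn0
    exact ⟨n, by simpa using hn⟩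
  choose m hm using hdiv'
  obtain rfl : q = fun j => a j * m j := funext hm
  refine ⟨(Fintype.piFinset fun j => Finset.range (m j)).image fun c j => a j * c j, ?_⟩
  have hinj : Function.Injective fun (c : ι → ℕ) j => a j * c j := fun c c' h =>
    funext fun j => by exact_mod_cast mul_left_cancel₀ (ha j).ne' (congrFun h j)
  simpa only [coverNumber, Finset.sum_image fun c _ c' _ h => hinj h]
    using ae_sum_indicator_brick_grid (fun j => (ha j).le) m

theorem ae_euclideanSpace_iff {P : (ι → ℝ) → Prop} :
    (∀ᵐ x : EuclideanSpace ℝ ι, P x.ofLp) ↔ ∀ᵐ y : ι → ℝ, P y :=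
  ⟨(PiLp.volume_preserving_toLp ι).quasiMeasurePreserving.ae,
    (PiLp.volume_preserving_ofLp ι).quasiMeasurePreserving.ae⟩

end BrickTiling

open BrickTiling

theorem side_divisibility_of_two_brick_tiling_general (d : ℕ)
    (a b q : Fin d → ℝ) (ha : ∀ j, 0 < a j) (hq : ∀ j, 0 < q j)
    (A B Q : Set (EuclideanSpace ℝ (Fin d)))
    (hA : A = {x : EuclideanSpace ℝ (Fin d) | ∀ j, x j ∈ Set.Ioo 0 (a j)})
    (hB : B = {x : EuclideanSpace ℝ (Fin d) | ∀ j, x j ∈ Set.Ioo 0 (b j)})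
    (hQ : Q = {x : EuclideanSpace ℝ (Fin d) | ∀ j, x j ∈ Set.Ioo 0 (q j)})
    (Λa Λb : Finset (EuclideanSpace ℝ (Fin d)))
    (htile : ∀ᵐ x : EuclideanSpace ℝ (Fin d),
      (∑ l ∈ Λa, A.indicator (fun _ => (1 : ℝ)) (x - l)) +
      (∑ l ∈ Λb, B.indicator (fun _ => (1 : ℝ)) (x - l)) =
      Q.indicator (fun _ => (1 : ℝ)) x)
    (hnotA : ¬ ∃ Λ : Finset (EuclideanSpace ℝ (Fin d)),
      ∀ᵐ x : EuclideanSpace ℝ (Fin d),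
        (∑ l ∈ Λ, A.indicator (fun _ => (1 : ℝ)) (x - l)) =
        Q.indicator (fun _ => (1 : ℝ)) x) :
    ∃ k : Fin d, ∀ j : Fin d, j ≠ k → ∃ n : ℤ, q j = b j * n := by
  subst hA hB hQ
  by_contra! hcon
  have htile' : ∀ᵐ y, coverNumber a (Λa.image WithLp.ofLp) y +
      coverNumber b (Λb.image WithLp.ofLp) y = (brick q).indicator 1 y := by
    rw [← ae_euclideanSpace_iff]
    filter_upwards [htile] with x hx
    simpa only [coverNumber, Finset.sum_image (WithLp.ofLp_injective 2).injOn,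
      indicator_setOf_euclideanSpace, WithLp.ofLp_sub] using hx
  obtain ⟨Λ, hΛ⟩ := exists_brick_tiling_of_forall_eq_mul ha hq fun i =>
    let ⟨ℓ, hℓi, hℓ⟩ := hcon i
    exists_eq_mul_of_two_brick_tiling hq htile' hℓi hℓ
  refine hnotA ⟨Λ.image (WithLp.toLp 2), ?_⟩
  rw [← ae_euclideanSpace_iff] at hΛ
  filter_upwards [hΛ] with x hx
  simpa only [coverNumber, Finset.sum_image (WithLp.toLp_injective 2).injOn,
    indicator_setOf_euclideanSpace, WithLp.ofLp_sub, WithLp.ofLp_toLp] using hx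

/-- If bricks `A` and `B` tile a box `Q` of dimensions `q` and `A` does not by itself
tile `Q`, then there is an index `k` such that for every `j ≠ k` the side `b j` divides
`q j` (i.e. `q j / b j` is an integer). -/
theorem side_divisibility_of_two_brick_tiling (d : ℕ) (hd : 2 ≤ d)
    (a b q : Fin d → ℝ) (ha : ∀ j, 0 < a j) (hb : ∀ j, 0 < b j) (hq : ∀ j, 0 < q j)
    (A B Q : Set (EuclideanSpace ℝ (Fin d)))
    (hA : A = {x : EuclideanSpace ℝ (Fin d) | ∀ j, x j ∈ Set.Ioo 0 (a j)})
    (hB : B = {x : EuclideanSpace ℝ (Fin d) | ∀ j, x j ∈ Set.Ioo 0 (b j)})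
    (hQ : Q = {x : EuclideanSpace ℝ (Fin d) | ∀ j, x j ∈ Set.Ioo 0 (q j)})
    (Λa Λb : Finset (EuclideanSpace ℝ (Fin d)))
    (htile : ∀ᵐ x : EuclideanSpace ℝ (Fin d),
      (∑ l ∈ Λa, A.indicator (fun _ => (1 : ℝ)) (x - l)) +
      (∑ l ∈ Λb, B.indicator (fun _ => (1 : ℝ)) (x - l)) =
      Q.indicator (fun _ => (1 : ℝ)) x)
    (hnotA : ¬ ∃ Λ : Finset (EuclideanSpace ℝ (Fin d)),
      ∀ᵐ x : EuclideanSpace ℝ (Fin d),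
        (∑ l ∈ Λ, A.indicator (fun _ => (1 : ℝ)) (x - l)) =
        Q.indicator (fun _ => (1 : ℝ)) x) :
    ∃ k : Fin d, ∀ j : Fin d, j ≠ k → ∃ n : ℤ, q j = b j * n :=
  side_divisibility_of_two_brick_tiling_general d a b q ha hq A B Q hA hB hQ Λa Λb htile hnotA
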